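/- arXiv:2112.01710 — 2 statements merged into one kernel-verified Lean document; each statement's English description precedes it below -/
import Mathlib

section
/- Let T be a tree with proper 2-coloring χ such that both color classes of χ contain a vertex of degree at least Δ in T (i.e., Δ(T) ≥ Δ). Let H be a Δ-uniform hypergraph, let B, C ≥ 1, let H' be the B-blowup of H with each hyperedge duplicated C times, and let G be the vertex–hyperedge incidence graph of H'. Then the minimum size of a T-transversal of G is at most B times the minimum size of a vertex cover of H. -/
/-!
Lift a minimum vertex cover `S` of `H` to `S × [B]`. In a copy of `T` in the incidence graph,
the two vertices of degree `≥ Δ` receive different colours, so, `T` being connected and the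
incidence graph bipartite, one of them is mapped onto a hyperedge `e`. As `e` has only `Δ`
neighbours, the injectively mapped neighbourhood of that vertex covers all of `e`, and `e`
meets `S × [B]`.
-/

/-- The vertex–hyperedge incidence graph of a membership relation `mem : α → β → Prop`:
the bipartite graph on `α ⊕ β` in which `Sum.inl a` is adjacent to `Sum.inr b`
iff `mem a b`. -/
def incidenceGraph {α β : Type*} (mem : α → β → Prop) : SimpleGraph (α ⊕ β) where
  Adj x y := (∃ a b, x = Sum.inl a ∧ y = Sum.inr b ∧ mem a b) ∨
             (∃ a b, x = Sum.inr b ∧ y = Sum.inl a ∧ mem a b)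
  symm := by
    constructor
    rintro x y (⟨a, b, rfl, rfl, h⟩ | ⟨a, b, rfl, rfl, h⟩)
    · exact Or.inr ⟨a, b, rfl, rfl, h⟩
    · exact Or.inl ⟨a, b, rfl, rfl, h⟩
  loopless := by
    constructor
    rintro x (⟨a, b, h1, h2, -⟩ | ⟨a, b, h1, h2, -⟩) <;> simp_all

/-- `S` is a `T`-transversal of `G`: every copy of `T` in `G` (i.e. every injective graph
homomorphism from `T` to `G`) meets `S`. -/
def IsTTransversal {α β : Type*} (T : SimpleGraph α) (G : SimpleGraph β) (S : Set β) : Prop :=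
  ∀ f : α → β, Function.Injective f → (∀ u v, T.Adj u v → G.Adj (f u) (f v)) →
    ∃ u, f u ∈ S

open SimpleGraph Finset

section IncidenceGraph

variable {α β : Type*}

lemma incidenceGraph_adj_inr_iff {mem : α → β → Prop} {b : β} {y : α ⊕ β} :
    (incidenceGraph mem).Adj (.inr b) y ↔ ∃ a, y = .inl a ∧ mem a b := by
  constructor
  · rintro (⟨a, b', h, -, -⟩ | ⟨a, b', h, rfl, hm⟩)
    · cases h
    · cases h; exact ⟨a, rfl, hm⟩
  · rintro ⟨a, rfl, hm⟩
    exact Or.inr ⟨a, b, rfl, rfl, hm⟩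

def incidenceGraph.sideColoring (mem : α → β → Prop) : (incidenceGraph mem).Coloring Bool :=
  Coloring.mk Sum.isLeft <| by
    rintro _ _ (⟨a, b, rfl, rfl, -⟩ | ⟨a, b, rfl, rfl, -⟩) <;> simp

@[simp]
lemma incidenceGraph.sideColoring_apply (mem : α → β → Prop) (x : α ⊕ β) :
    incidenceGraph.sideColoring mem x = x.isLeft :=
  rfl

end IncidenceGraph

lemma SimpleGraph.Preconnected.coloring_congr_iff {γ : Type*} {G : SimpleGraph γ}
    (hG : G.Preconnected) (c c' : G.Coloring Bool) (u v : γ) :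
    (c u ↔ c v) ↔ (c' u ↔ c' v) := by
  obtain ⟨p⟩ := hG u v
  rw [← c.even_length_iff_congr p, c'.even_length_iff_congr p]

section Copy

variable {α β γ : Type*} {T : SimpleGraph γ} {N : β → Finset α}

lemma SimpleGraph.Copy.isRight_or_isRight_of_coloring_ne {mem : α → β → Prop}
    (φ : T.Copy (incidenceGraph mem)) (hT : T.Preconnected) (c : T.Coloring Bool) {v₀ v₁ : γ}
    (hc : c v₀ ≠ c v₁) : (φ v₀).isRight ∨ (φ v₁).isRight := by
  have := hT.coloring_congr_iff c ((incidenceGraph.sideColoring mem).comp φ.toHom) v₀ v₁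
  cases h₀ : (φ v₀) <;> cases h₁ : (φ v₁) <;> simp_all

lemma SimpleGraph.Copy.exists_eq_inl_of_card_le_degree [T.LocallyFinite]
    (φ : T.Copy (incidenceGraph fun a b ↦ a ∈ N b)) {u : γ} {b : β} (hu : φ u = .inr b)
    (hdeg : (N b).card ≤ T.degree u) {a : α} (ha : a ∈ N b) : ∃ w, φ w = .inl a := by
  classical
  have hsub : (T.neighborFinset u).image φ ⊆ (N b).map .inl := by
    simp only [subset_iff, mem_image, mem_map, mem_neighborFinset]
    rintro _ ⟨w, hw, rfl⟩
    obtain ⟨a', h, ha'⟩ := incidenceGraph_adj_inr_iff.mp (hu ▸ φ.toHom.map_adj hw)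
    exact ⟨a', ha', h.symm⟩
  have heq := eq_of_subset_of_card_le hsub <| by
    rw [card_map, card_image_of_injective (f := φ) _ φ.injective, card_neighborFinset_eq_degree]
    exact hdeg
  obtain ⟨w, -, hw⟩ := mem_image.mp (heq ▸ mem_map_of_mem _ ha)
  exact ⟨w, hw⟩

end Copy

theorem isTTransversal_image_inl {α β γ : Type*} {T : SimpleGraph γ} [T.LocallyFinite]
    (hT : T.Preconnected) (c : T.Coloring Bool) {Δ : ℕ} {v₀ v₁ : γ} (hc : c v₀ ≠ c v₁)
    (h₀ : Δ ≤ T.degree v₀) (h₁ : Δ ≤ T.degree v₁) (N : β → Finset α)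
    (hN : ∀ b, (N b).card ≤ Δ) (S : Set α) (hS : ∀ b, (N b).Nonempty → ∃ a ∈ N b, a ∈ S) :
    IsTTransversal T (incidenceGraph fun a b ↦ a ∈ N b) (Sum.inl '' S) := by
  intro f hf hhom
  let φ : T.Copy (incidenceGraph fun a b ↦ a ∈ N b) := ⟨⟨f, hhom _ _⟩, hf⟩
  have hit : ∀ u, Δ ≤ T.degree u → (f u).isRight → ∃ w, f w ∈ Sum.inl '' S := by
    intro u hdeg hu
    obtain ⟨b, hb⟩ := Sum.isRight_iff.mp hu
    have : Nontrivial γ := ⟨⟨v₀, v₁, fun h ↦ hc (h ▸ rfl)⟩⟩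
    obtain ⟨w, hw⟩ := hT.exists_adj_of_nontrivial u
    obtain ⟨a₀, -, ha₀⟩ := incidenceGraph_adj_inr_iff.mp (hb ▸ hhom _ _ hw)
    obtain ⟨a, ha, haS⟩ := hS b ⟨a₀, ha₀⟩
    obtain ⟨w, hw⟩ := φ.exists_eq_inl_of_card_le_degree hb ((hN b).trans hdeg) ha
    exact ⟨w, a, haS, hw.symm⟩
  rcases φ.isRight_or_isRight_of_coloring_ne hT c hc with h | h
  · exact hit v₀ h₀ h
  · exact hit v₁ h₁ h

theorem transversal_le_blowup_cover_general {α V : Type*} [Fintype α] [DecidableEq V]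
    (Δ B C : ℕ)
    (T : SimpleGraph α) [DecidableRel T.Adj] (htree : T.IsTree)
    (χ : α → Fin 2) (hχ : ∀ u v, T.Adj u v → χ u ≠ χ v)
    (h0 : ∃ v, χ v = 0 ∧ Δ ≤ T.degree v)
    (h1 : ∃ v, χ v = 1 ∧ Δ ≤ T.degree v)
    (E : Finset (Finset V)) (hunif : ∀ e ∈ E, e.card = Δ) :
    sInf {n : ℕ | ∃ S : Finset ((V × Fin B) ⊕
          ({e' : Finset (V × Fin B) // e'.card = Δ ∧ e'.image Prod.fst ∈ E} × Fin C)),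
        IsTTransversal T
          (incidenceGraph (fun (p : V × Fin B)
              (ec : {e' : Finset (V × Fin B) // e'.card = Δ ∧ e'.image Prod.fst ∈ E} × Fin C)
              => p ∈ ec.1.val)) ↑S ∧ S.card = n}
      ≤ B * sInf {n : ℕ | ∃ S : Finset V, (∀ e ∈ E, ∃ v ∈ e, v ∈ S) ∧ S.card = n} := by
  obtain ⟨v₀, hχ₀, hdeg₀⟩ := h0
  obtain ⟨v₁, hχ₁, hdeg₁⟩ := h1
  let c : T.Coloring Bool := T.recolorOfEquiv finTwoEquiv (Coloring.mk χ (hχ _ _))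
  have hc : c v₀ ≠ c v₁ := finTwoEquiv.injective.ne (show χ v₀ ≠ χ v₁ by simp [hχ₀, hχ₁])
  have key := isTTransversal_image_inl htree.connected.preconnected c hc hdeg₀ hdeg₁
    (fun ec : {e' : Finset (V × Fin B) // e'.card = Δ ∧ e'.image Prod.fst ∈ E} × Fin C ↦
      ec.1.val) (fun ec ↦ ec.1.2.1.le)
  by_cases hcover : {n : ℕ | ∃ S : Finset V, (∀ e ∈ E, ∃ v ∈ e, v ∈ S) ∧ S.card = n}.Nonempty
  · obtain ⟨S, hS, hcard⟩ := Nat.sInf_mem hcover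
    refine le_trans (Nat.sInf_le ⟨(S ×ˢ univ).map .inl, ?_, rfl⟩) ?_
    · rw [coe_map]
      refine key _ fun ec _ ↦ ?_
      obtain ⟨_, hv, hvS⟩ := hS _ ec.1.2.2
      obtain ⟨p, hp, rfl⟩ := mem_image.mp hv
      exact ⟨p, hp, mem_product.mpr ⟨hvS, mem_univ _⟩⟩
    · rw [card_map, card_product, card_univ, Fintype.card_fin, hcard, mul_comm]
  · -- with no vertex cover, `E` contains `∅`, so `Δ = 0` and the blown-up hyperedges are empty
    have hΔ : Δ = 0 := by
      by_contra hΔ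
      refine hcover ⟨_, E.biUnion id, fun e he ↦ ?_, rfl⟩
      obtain ⟨v, hv⟩ := card_pos.mp (hunif e he ▸ Nat.pos_of_ne_zero hΔ)
      exact ⟨v, hv, mem_biUnion.mpr ⟨e, he, hv⟩⟩
    rw [Set.not_nonempty_iff_eq_empty.mp hcover, Nat.sInf_empty, mul_zero]
    refine Nat.le_zero.mpr (Nat.sInf_eq_zero.mpr (Or.inl ⟨∅, ?_, rfl⟩))
    rw [coe_empty, ← Set.image_empty Sum.inl]
    exact key ∅ fun ec hne ↦ absurd (ec.1.2.1.trans hΔ) hne.card_pos.ne'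

/-- Let `T` be a tree with proper 2-coloring `χ` having a vertex of degree at least `Δ`
in each color class (i.e. `Δ(T) ≥ Δ`).  Let `H = (V, E)` be a `Δ`-uniform hypergraph,
`B, C ≥ 1`, let `H'` be the `B`-blowup of `H` with each hyperedge duplicated `C` times, and
let `G` be the vertex–hyperedge incidence graph of `H'`.  Then the minimum size of a
`T`-transversal of `G` is at most `B` times the minimum size of a vertex cover of `H`. -/
theorem transversal_le_blowup_cover {α V : Type*} [Fintype α] [Fintype V] [DecidableEq V]
    (Δ B C : ℕ) (hB : 1 ≤ B) (hC : 1 ≤ C)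
    (T : SimpleGraph α) [DecidableRel T.Adj] (htree : T.IsTree)
    (χ : α → Fin 2) (hχ : ∀ u v, T.Adj u v → χ u ≠ χ v)
    (h0 : ∃ v, χ v = 0 ∧ Δ ≤ T.degree v)
    (h1 : ∃ v, χ v = 1 ∧ Δ ≤ T.degree v)
    (E : Finset (Finset V)) (hunif : ∀ e ∈ E, e.card = Δ) :
    sInf {n : ℕ | ∃ S : Finset ((V × Fin B) ⊕
          ({e' : Finset (V × Fin B) // e'.card = Δ ∧ e'.image Prod.fst ∈ E} × Fin C)),
        IsTTransversal T
          (incidenceGraph (fun (p : V × Fin B)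
              (ec : {e' : Finset (V × Fin B) // e'.card = Δ ∧ e'.image Prod.fst ∈ E} × Fin C)
              => p ∈ ec.1.val)) ↑S ∧ S.card = n}
      ≤ B * sInf {n : ℕ | ∃ S : Finset V, (∀ e ∈ E, ∃ v ∈ e, v ∈ S) ∧ S.card = n} :=
  transversal_le_blowup_cover_general Δ B C T htree χ hχ h0 h1 E hunif
end

section
/- Let T be a tree with k vertices and Δ = Δ(T) ≥ 3. Let H be a Δ-uniform hypergraph, let w = k^{3k}, let B > w, and let C > 2·max(B·|V(H)|, k). Let H' be the B-blowup of H with each hyperedge duplicated C times, and let G be the vertex–hyperedge incidence graph of H'. Then τ(H) · (B − w) ≤ τ_T(G) ≤ τ(H) · B, where τ(H) is the minimum size of a vertex cover of H and τ_T(G) is the minimum size of a T-transversal of G. -/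
/-!
For the upper bound, take all `B` copies of a minimum vertex cover `S₀` of `H`. Since `G` is
bipartite and both colour classes of `T` contain a vertex of degree at least `Δ`, every copy of
`T` in `G` sends such a vertex `u` to a hyperedge `ec` of size `Δ`; then every vertex of `ec` is
the image of a neighbour of `u`, and one of them is a copy of a vertex of `S₀`.

For the lower bound, let `S` be a `T`-transversal and `W` the set of vertices of `H` with at
least `B - w` copies in `S`, so that `|W| (B - w) ≤ |S|`. If a hyperedge `e` missed `W`, each
vertex of `e` would have more than `w ≥ k` copies outside `S`, and (as `C` is large) at least
`k` labels would be unused by `S`. Then `T` embeds in `G - S`: label `T` by `e` injectively on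
the neighbourhood of every vertex of the colour class whose degrees are at most `Δ` (possible
in a tree, leaf by leaf), send that class to hyperedges of the blowup over `e`, and the other
class to distinct free copies of their labels. Hence `W` is a vertex cover of `H`.
-/

open Finset

namespace SimpleGraph

variable {α β : Type*} {T : SimpleGraph α}

lemma injOn_neighborSet_of_injOn_sdiff {ℓ p u : α} (hp : ∀ y, T.Adj ℓ y → y = p) {ψ : α → β}
    (hinj : Set.InjOn ψ (T.neighborSet u \ {ℓ}))
    (hℓ : u = p → ψ ℓ ∉ ψ '' (T.neighborSet u \ {ℓ})) : Set.InjOn ψ (T.neighborSet u) := by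
  by_cases hℓu : ℓ ∈ T.neighborSet u
  · rw [← Set.insert_eq_of_mem hℓu, ← Set.insert_sdiff_singleton]
    exact (Set.injOn_insert fun h => h.2 rfl).2 ⟨hinj, hℓ (hp u (T.adj_symm hℓu))⟩
  · rwa [Set.sdiff_singleton_eq_self hℓu] at hinj

/-- Removing a leaf `ℓ` with neighbour `p` and labelling the rest inductively, `ℓ` only needs
a label avoiding those of the other neighbours of `p`, of which there are fewer than
`Nat.card β`. -/
theorem IsTree.exists_injOn_neighborSet [Finite α] [Finite β] [Nonempty β]
    (hT : T.IsTree) (A : Set α) (hA : ∀ u ∈ A, (T.neighborSet u).ncard ≤ Nat.card β) :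
    ∃ ψ : α → β, ∀ u ∈ A, Set.InjOn ψ (T.neighborSet u) := by
  induction h : Nat.card α using Nat.strong_induction_on generalizing α with
  | _ n ih =>
  rcases subsingleton_or_nontrivial α with hα | hα
  · exact ⟨fun _ => Classical.arbitrary β, fun u _ => Set.subsingleton_of_subsingleton.injOn _⟩
  classical
  have := Fintype.ofFinite α
  obtain ⟨ℓ, hℓ⟩ := hT.exists_vert_degree_one_of_nontrivial
  obtain ⟨p, hℓp, hp⟩ := degree_eq_one_iff_existsUnique_adj.mp hℓ
  set T' := T.induce {ℓ}ᶜ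
  have hT' : T'.IsTree :=
    ⟨hT.connected.induce_compl_singleton_of_degree_eq_one hℓ, hT.isAcyclic.induce _⟩
  have hcard : Nat.card ({ℓ}ᶜ : Set α) < n := by
    rw [← h, Nat.card_coe_set_eq]
    exact Set.ncard_lt_card (by simp)
  have himage (u : ({ℓ}ᶜ : Set α)) :
      Subtype.val '' T'.neighborSet u = T.neighborSet u \ {ℓ} := by
    rw [neighborSet_induce, Subtype.image_preimage_coe, Set.inter_comm, Set.sdiff_eq]
  have hncard (u : ({ℓ}ᶜ : Set α)) :
      (T'.neighborSet u).ncard = (T.neighborSet u \ {ℓ}).ncard := by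
    rw [← himage, Set.ncard_image_of_injective _ Subtype.val_injective]
  obtain ⟨ψ', hψ'⟩ := ih _ hcard hT' {x | x.1 ∈ A}
    (fun u hu => (hncard u).trans_le <| (Set.ncard_le_ncard Set.sdiff_subset).trans (hA u hu))
    rfl
  have hpℓ : p ≠ ℓ := hℓp.ne.symm
  obtain ⟨c, hc⟩ : ∃ c, p ∈ A → c ∉ ψ' '' T'.neighborSet ⟨p, hpℓ⟩ := by
    by_cases hpA : p ∈ A
    · have hlt : (ψ' '' T'.neighborSet ⟨p, hpℓ⟩).ncard < Nat.card β := by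
        refine (Set.ncard_image_le (Set.toFinite _)).trans_lt ?_
        rw [hncard]
        exact (Set.ncard_sdiff_singleton_lt_of_mem hℓp.symm).trans_le (hA p hpA)
      obtain ⟨c, hc⟩ : (ψ' '' T'.neighborSet ⟨p, hpℓ⟩)ᶜ.Nonempty := by
        rw [Set.nonempty_compl]
        rintro hu
        rw [hu, Set.ncard_univ] at hlt
        exact hlt.false
      exact ⟨c, fun _ => hc⟩
    · exact ⟨Classical.arbitrary β, fun h => absurd h hpA⟩
  set ψ : α → β := fun x => if hx : x = ℓ then c else ψ' ⟨x, hx⟩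
  have hψ (u : ({ℓ}ᶜ : Set α)) : ψ '' (T.neighborSet u \ {ℓ}) = ψ' '' T'.neighborSet u := by
    rw [← himage, Set.image_image]
    exact Set.image_congr fun x _ => dif_neg x.2
  refine ⟨ψ, fun u hu => ?_⟩
  by_cases huℓ : u = ℓ
  · subst huℓ
    exact Set.Subsingleton.injOn (fun x hx y hy => (hp x hx).trans (hp y hy).symm) _
  refine injOn_neighborSet_of_injOn_sdiff hp ?_ fun hup => ?_
  · rw [← himage ⟨u, huℓ⟩]
    exact Set.InjOn.image_of_comp <|
      (hψ' ⟨u, huℓ⟩ hu).congr fun x _ => (show ψ x = ψ' x from dif_neg x.2).symm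
  · subst hup
    rw [hψ ⟨u, huℓ⟩, show ψ ℓ = c from dif_pos rfl]
    exact hc hu

lemma Preconnected.eq_iff_eq_of_adj_ne (hT : T.Preconnected) {c : α → Bool} {χ : α → Fin 2}
    (hc : ∀ u v, T.Adj u v → c u ≠ c v) (hχ : ∀ u v, T.Adj u v → χ u ≠ χ v) (x y : α) :
    c x = c y ↔ χ x = χ y := by
  obtain ⟨p⟩ := hT x y
  induction p with
  | nil => simp
  | cons hadj _ ih =>
    have hBool : ∀ a b d : Bool, a ≠ b → (a = d ↔ ¬ b = d) := by decide
    have hFin : ∀ a b d : Fin 2, a ≠ b → (a = d ↔ ¬ b = d) := by decide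
    rw [hBool _ _ _ (hc _ _ hadj), hFin _ _ _ (hχ _ _ hadj), ih]

end SimpleGraph

section incidenceGraph

variable {γ δ : Type*} {mem : γ → δ → Prop} {a : γ} {b : δ}

@[simp] lemma incidenceGraph_adj_inr_inl :
    (incidenceGraph mem).Adj (.inr b) (.inl a) ↔ mem a b := by
  simp [incidenceGraph]

@[simp] lemma incidenceGraph_not_adj_inr_inr {b' : δ} :
    ¬ (incidenceGraph mem).Adj (.inr b) (.inr b') := by
  simp [incidenceGraph]

lemma incidenceGraph_isLeft_ne_of_adj {x y : γ ⊕ δ} (h : (incidenceGraph mem).Adj x y) :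
    x.isLeft ≠ y.isLeft := by
  rcases h with ⟨a, b, rfl, rfl, -⟩ | ⟨a, b, rfl, rfl, -⟩ <;> simp

end incidenceGraph

section ColorClasses

variable {α : Type*} [Fintype α] {χ : α → Fin 2} {d : α → ℕ} {Δ : ℕ}

lemma exists_forall_le_of_eq_min_sup
    (hΔ : Δ = min ((univ.filter fun v => χ v = 0).sup d) ((univ.filter fun v => χ v = 1).sup d)) :
    ∃ i₀, ∀ u, χ u = i₀ → d u ≤ Δ := by
  rcases min_choice ((univ.filter fun v => χ v = 0).sup d)
    ((univ.filter fun v => χ v = 1).sup d) with h | h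
  · exact ⟨0, fun u hu => (le_sup (f := d) (by simpa using hu)).trans (hΔ.trans h).ge⟩
  · exact ⟨1, fun u hu => (le_sup (f := d) (by simpa using hu)).trans (hΔ.trans h).ge⟩

lemma exists_le_of_eq_min_sup
    (hΔ : Δ = min ((univ.filter fun v => χ v = 0).sup d) ((univ.filter fun v => χ v = 1).sup d))
    (hpos : 0 < Δ) (i : Fin 2) : ∃ u, χ u = i ∧ Δ ≤ d u := by
  have hle : Δ ≤ (univ.filter fun v => χ v = i).sup d := by
    fin_cases i
    exacts [hΔ ▸ min_le_left _ _, hΔ ▸ min_le_right _ _]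
  obtain ⟨u, hu, hdu⟩ := (Finset.le_sup_iff hpos).1 hle
  exact ⟨u, (mem_filter.1 hu).2, hdu⟩

end ColorClasses

section VertexCover

variable {V : Type*}

def IsVertexCover (E : Finset (Finset V)) (S : Finset V) : Prop :=
  ∀ e ∈ E, ∃ v ∈ e, v ∈ S

noncomputable def vertexCoverNumber (E : Finset (Finset V)) : ℕ :=
  sInf {n | ∃ S, IsVertexCover E S ∧ S.card = n}

lemma vertexCoverNumber_le {E : Finset (Finset V)} {S : Finset V} (hS : IsVertexCover E S) :
    vertexCoverNumber E ≤ S.card :=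
  Nat.sInf_le ⟨S, hS, rfl⟩

variable [Fintype V] {E : Finset (Finset V)}

lemma isVertexCover_univ (hE : ∀ e ∈ E, e.Nonempty) : IsVertexCover E univ :=
  fun e he => (hE e he).imp fun v hv => ⟨hv, mem_univ v⟩

lemma exists_isVertexCover_card_eq (hE : ∀ e ∈ E, e.Nonempty) :
    ∃ S, IsVertexCover E S ∧ S.card = vertexCoverNumber E :=
  Nat.sInf_mem (s := {n | ∃ S, IsVertexCover E S ∧ S.card = n})
    ⟨_, univ, isVertexCover_univ hE, rfl⟩

end VertexCover

section Blowup

variable {V : Type*} [DecidableEq V]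

abbrev BlowupHyperedge (E : Finset (Finset V)) (Δ B : ℕ) :=
  {e' : Finset (V × Fin B) // e'.card = Δ ∧ e'.image Prod.fst ∈ E}

/-- `(ec, j)` is the `j`-th duplicate of the blowup hyperedge `ec`; the condition
`ec.card = Δ` makes the copies in `ec` lie over distinct vertices of `E`. -/
abbrev blowupGraph (E : Finset (Finset V)) (Δ B C : ℕ) :
    SimpleGraph ((V × Fin B) ⊕ (BlowupHyperedge E Δ B × Fin C)) :=
  incidenceGraph fun p ec => p ∈ ec.1.val

end Blowup

section Transversal

variable {α β : Type*} {T : SimpleGraph α} {G : SimpleGraph β}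

noncomputable def transversalNumber (T : SimpleGraph α) (G : SimpleGraph β) : ℕ :=
  sInf {n | ∃ S : Finset β, IsTTransversal T G ↑S ∧ S.card = n}

lemma transversalNumber_le {S : Finset β} (hS : IsTTransversal T G ↑S) :
    transversalNumber T G ≤ S.card :=
  Nat.sInf_le ⟨S, hS, rfl⟩

lemma le_transversalNumber [Fintype β] [Nonempty α] {m : ℕ}
    (h : ∀ S : Finset β, IsTTransversal T G ↑S → m ≤ S.card) : m ≤ transversalNumber T G := by
  obtain ⟨S, hS, hcard⟩ :
      ∃ S : Finset β, IsTTransversal T G ↑S ∧ S.card = transversalNumber T G :=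
    Nat.sInf_mem (s := {n | ∃ S : Finset β, IsTTransversal T G ↑S ∧ S.card = n})
      ⟨_, univ, fun _ _ _ => ⟨Classical.arbitrary α, by simp⟩, rfl⟩
  exact hcard ▸ h S hS

end Transversal

section UpperBound

variable {α V : Type*} [DecidableEq V] {T : SimpleGraph α} {E : Finset (Finset V)} {Δ B C : ℕ}

lemma inl_image_subset_image_neighborSet [Finite α]
    {f : α → (V × Fin B) ⊕ (BlowupHyperedge E Δ B × Fin C)} (hf : Function.Injective f)
    (hom : ∀ u v, T.Adj u v → (blowupGraph E Δ B C).Adj (f u) (f v)) {u : α}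
    (hu : Δ ≤ (T.neighborSet u).ncard) {ec : BlowupHyperedge E Δ B} {j : Fin C}
    (hfu : f u = .inr (ec, j)) :
    Sum.inl '' ↑ec.1 ⊆ f '' T.neighborSet u := by
  have hsub : f '' T.neighborSet u ⊆ Sum.inl '' ↑ec.1 := by
    rintro _ ⟨x, hx, rfl⟩
    have hadj := hom u x hx
    rw [hfu] at hadj
    cases hfx : f x with
    | inl p => rw [hfx] at hadj; exact ⟨p, by simpa using hadj, rfl⟩
    | inr q => rw [hfx] at hadj; simp at hadj
  refine (Set.eq_of_subset_of_ncard_le hsub ?_ (Set.toFinite _)).ge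
  rw [Set.ncard_image_of_injective _ Sum.inl_injective, Set.ncard_coe_finset, ec.2.1,
    Set.ncard_image_of_injective _ hf]
  exact hu

theorem isTTransversal_blowupGraph [Finite α] (hT : T.Preconnected) {χ : α → Fin 2}
    (hχ : ∀ u v, T.Adj u v → χ u ≠ χ v)
    (hhigh : ∀ i, ∃ u, χ u = i ∧ Δ ≤ (T.neighborSet u).ncard) {S : Finset V}
    (hS : IsVertexCover E S) :
    IsTTransversal T (blowupGraph E Δ B C)
      ↑((S ×ˢ univ).map .inl : Finset ((V × Fin B) ⊕ (BlowupHyperedge E Δ B × Fin C))) := by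
  intro f hf hom
  obtain ⟨u₀, hu₀, hdeg₀⟩ := hhigh 0
  obtain ⟨u₁, hu₁, hdeg₁⟩ := hhigh 1
  have hside : (f u₀).isLeft ≠ (f u₁).isLeft := by
    rw [Ne, hT.eq_iff_eq_of_adj_ne (c := fun x => (f x).isLeft)
      (fun u v h => incidenceGraph_isLeft_ne_of_adj (hom u v h)) hχ, hu₀, hu₁]
    decide
  obtain ⟨u, hu, ec, j, hfu⟩ :
      ∃ u, Δ ≤ (T.neighborSet u).ncard ∧ ∃ ec j, f u = .inr (ec, j) := by
    cases h₀ : f u₀ with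
    | inr q => exact ⟨u₀, hdeg₀, q.1, q.2, h₀⟩
    | inl _ =>
      cases h₁ : f u₁ with
      | inr q => exact ⟨u₁, hdeg₁, q.1, q.2, h₁⟩
      | inl _ => simp [h₀, h₁] at hside
  obtain ⟨v, hv, hvS⟩ := hS _ ec.2.2
  obtain ⟨p, hp, rfl⟩ := Finset.mem_image.1 hv
  obtain ⟨x, -, hx⟩ := inl_image_subset_image_neighborSet hf hom hu hfu ⟨p, hp, rfl⟩
  exact ⟨x, by simp [hx, hvS]⟩

end UpperBound

namespace Finset

variable {V I : Type*} [Fintype V] [Fintype I] [DecidableEq V] [DecidableEq I]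

lemma sum_card_filter_prodMk_mem (L : Finset (V × I)) : ∑ v, #{i | (v, i) ∈ L} = #L := by
  simp only [card_filter]
  rw [← Fintype.sum_prod_type' (f := fun v i => if (v, i) ∈ L then 1 else 0)]
  simp

lemma card_filter_le_card_fiber_mul_le (L : Finset (V × I)) (m : ℕ) :
    #{v | m ≤ #{i | (v, i) ∈ L}} * m ≤ #L := by
  set W : Finset V := {v | m ≤ #{i | (v, i) ∈ L}}
  calc #W * m = ∑ v ∈ W, m := by rw [sum_const, smul_eq_mul]
    _ ≤ ∑ v ∈ W, #{i | (v, i) ∈ L} := sum_le_sum fun v hv => (mem_filter.1 hv).2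
    _ ≤ ∑ v, #{i | (v, i) ∈ L} := sum_le_sum_of_subset (subset_univ _)
    _ = #L := sum_card_filter_prodMk_mem L

end Finset

section LowerBound

variable {α V : Type*} [DecidableEq V] {T : SimpleGraph α} {E : Finset (Finset V)} {Δ B C : ℕ}

lemma exists_blowupHyperedge_superset [NeZero B] {e : Finset V} (he : e ∈ E)
    (hcard : e.card = Δ) {P : Set (V × Fin B)} (hP : Set.InjOn Prod.fst P)
    (hPe : ∀ p ∈ P, p.1 ∈ e) : ∃ ec : BlowupHyperedge E Δ B, P ⊆ ↑ec.1 := by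
  classical
  let σ : V → Fin B := fun v => if h : ∃ p ∈ P, p.1 = v then h.choose.2 else 0
  have hσ : ∀ p ∈ P, σ p.1 = p.2 := by
    intro p hp
    have h : ∃ q ∈ P, q.1 = p.1 := ⟨p, hp, rfl⟩
    simp only [σ, dif_pos h]
    rw [hP h.choose_spec.1 hp h.choose_spec.2]
  have hinj : Function.Injective fun v => (v, σ v) := fun _ _ h => congrArg Prod.fst h
  refine ⟨⟨e.image fun v => (v, σ v), ?_, ?_⟩, fun p hp => ?_⟩
  · rw [card_image_of_injective _ hinj, hcard]
  · rwa [image_image, show (Prod.fst ∘ fun v => (v, σ v)) = id from rfl, image_id]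
  · exact mem_image.2 ⟨p.1, hPe p hp, Prod.ext rfl (hσ p hp)⟩

lemma exists_injective_prodMk {γ δ : Type*} [Fintype α] (ψ : α → γ) (F : γ → Finset δ)
    (hF : ∀ x, Fintype.card α ≤ (F (ψ x)).card) :
    ∃ ι : α → δ, (∀ x, ι x ∈ F (ψ x)) ∧ Function.Injective fun x => (ψ x, ι x) := by
  have (v : Set.range ψ) : ∃ g : α → δ, Function.Injective g ∧ ∀ a, g a ∈ F v := by
    obtain ⟨_, x, rfl⟩ := v
    obtain ⟨g⟩ : Nonempty (α ↪ F (ψ x)) :=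
      Function.Embedding.nonempty_of_card_le (by simpa using hF x)
    exact ⟨fun a => g a, Subtype.val_injective.comp g.injective, fun a => (g a).2⟩
  choose g hg hgF using this
  refine ⟨fun x => g ⟨ψ x, x, rfl⟩ x, fun x => hgF _ x, fun x y hxy => ?_⟩
  obtain ⟨h₁, h₂⟩ := Prod.mk.inj hxy
  have : (⟨ψ x, x, rfl⟩ : Set.range ψ) = ⟨ψ y, y, rfl⟩ := Subtype.ext h₁
  dsimp only at h₂
  rw [this] at h₂
  exact hg _ h₂

lemma exists_blowupGraph_embedding [NeZero B] {χ : α → Fin 2}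
    (hχ : ∀ u v, T.Adj u v → χ u ≠ χ v) {i₀ : Fin 2} {e : Finset V} (he : e ∈ E)
    (hcard : e.card = Δ) {ψ : α → V} (hψe : ∀ x, ψ x ∈ e)
    (hψ : ∀ u, χ u = i₀ → Set.InjOn ψ (T.neighborSet u)) {ι : α → Fin B}
    (hι : Function.Injective fun x => (ψ x, ι x)) {ρ : α → Fin C} (hρ : Function.Injective ρ) :
    ∃ f : α → (V × Fin B) ⊕ (BlowupHyperedge E Δ B × Fin C), Function.Injective f ∧
      (∀ u v, T.Adj u v → (blowupGraph E Δ B C).Adj (f u) (f v)) ∧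
      ∀ x, f x = .inl (ψ x, ι x) ∨ ∃ ec, f x = .inr (ec, ρ x) := by
  have hec (u : α) (hu : χ u = i₀) : ∃ ec : BlowupHyperedge E Δ B,
      (fun x => (ψ x, ι x)) '' T.neighborSet u ⊆ ↑ec.1 := by
    refine exists_blowupHyperedge_superset he hcard ?_ ?_
    · rintro _ ⟨x, hx, rfl⟩ _ ⟨y, hy, rfl⟩ h
      rw [hψ u hu hx hy h]
    · rintro _ ⟨x, -, rfl⟩
      exact hψe x
  choose ec hec using hec
  let f x : (V × Fin B) ⊕ (BlowupHyperedge E Δ B × Fin C) :=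
    if hx : χ x = i₀ then .inr (ec x hx, ρ x) else .inl (ψ x, ι x)
  have hadj (u v : α) (huv : T.Adj u v) (hu : χ u = i₀) :
      (blowupGraph E Δ B C).Adj (f u) (f v) := by
    have hv : χ v ≠ i₀ := hu ▸ (hχ u v huv).symm
    simp only [f, dif_pos hu, dif_neg hv, incidenceGraph_adj_inr_inl]
    exact hec u hu ⟨v, huv, rfl⟩
  refine ⟨f, fun x y hxy => ?_, fun u v huv => ?_, fun x => ?_⟩
  · by_cases hx : χ x = i₀ <;> by_cases hy : χ y = i₀ <;> simp [f, hx, hy] at hxy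
    · exact hρ hxy.2
    · exact hι (Prod.ext hxy.1 hxy.2)
  · by_cases hu : χ u = i₀
    · exact hadj u v huv hu
    · have hv : χ v = i₀ := by have := hχ u v huv; omega
      exact (hadj v u huv.symm hv).symm
  · by_cases hx : χ x = i₀
    · exact .inr ⟨ec x hx, by simp [f, hx]⟩
    · exact .inl (by simp [f, hx])

theorem not_isTTransversal_blowupGraph [Fintype α] [NeZero B] (hT : T.IsTree) {χ : α → Fin 2}
    (hχ : ∀ u v, T.Adj u v → χ u ≠ χ v) {i₀ : Fin 2}
    (hlow : ∀ u, χ u = i₀ → (T.neighborSet u).ncard ≤ Δ) {e : Finset V} (he : e ∈ E)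
    (hcard : e.card = Δ) (he₀ : e.Nonempty)
    {S : Finset ((V × Fin B) ⊕ (BlowupHyperedge E Δ B × Fin C))}
    (hcopies : ∀ v ∈ e, Fintype.card α ≤ #{i | (v, i) ∉ S.toLeft})
    (hlabels : Fintype.card α ≤ #(univ \ S.toRight.image Prod.snd)) :
    ¬ IsTTransversal T (blowupGraph E Δ B C) ↑S := by
  have : Nonempty e := he₀.to_subtype
  obtain ⟨ψ, hψ⟩ := hT.exists_injOn_neighborSet (β := e) {u | χ u = i₀}
    (by simpa [hcard] using hlow)
  obtain ⟨ι, hιS, hι⟩ := exists_injective_prodMk (fun x => (ψ x : V))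
    (fun v => {i | (v, i) ∉ S.toLeft}) (fun x => hcopies _ (ψ x).2)
  obtain ⟨ρ⟩ : Nonempty (α ↪ ↥(univ \ S.toRight.image Prod.snd)) :=
    Function.Embedding.nonempty_of_card_le (by simpa using hlabels)
  obtain ⟨f, hf, hom, hfS⟩ := exists_blowupGraph_embedding hχ he hcard (fun x => (ψ x).2)
    (fun u hu => Subtype.val_injective.comp_injOn (hψ u hu)) hι
    (Subtype.val_injective.comp ρ.injective)
  intro hS
  obtain ⟨x, hx⟩ := hS f hf hom
  rcases hfS x with h | ⟨ec, h⟩ <;> rw [h] at hx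
  · exact (mem_filter.1 (hιS x)).2 (mem_toLeft.2 hx)
  · exact (mem_sdiff.1 (ρ x).2).2 (mem_image.2 ⟨(ec, ρ x), by simpa using hx, rfl⟩)

theorem vertexCoverNumber_mul_le_card [Fintype V] [Fintype α] (hT : T.IsTree) {χ : α → Fin 2}
    (hχ : ∀ u v, T.Adj u v → χ u ≠ χ v) {i₀ : Fin 2}
    (hlow : ∀ u, χ u = i₀ → (T.neighborSet u).ncard ≤ Δ) (hunif : ∀ e ∈ E, e.card = Δ)
    (hΔ : 0 < Δ) {w : ℕ} (hw : Fintype.card α ≤ w)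
    (hC : B * Fintype.card V + Fintype.card α ≤ C)
    {S : Finset ((V × Fin B) ⊕ (BlowupHyperedge E Δ B × Fin C))}
    (hS : IsTTransversal T (blowupGraph E Δ B C) ↑S) :
    vertexCoverNumber E * (B - w) ≤ #S := by
  have hE (e) (he : e ∈ E) : e.Nonempty := card_pos.1 (hunif e he ▸ hΔ)
  by_cases hSbig : B * Fintype.card V ≤ #S
  · calc vertexCoverNumber E * (B - w) ≤ Fintype.card V * B :=
          Nat.mul_le_mul (vertexCoverNumber_le (isVertexCover_univ hE)) (Nat.sub_le _ _)
      _ ≤ #S := by rwa [mul_comm]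
  by_cases hBw : B ≤ w
  · simp [Nat.sub_eq_zero_of_le hBw]
  have : NeZero B := ⟨by omega⟩
  set W : Finset V := {v | B - w ≤ #{i | (v, i) ∈ S.toLeft}}
  have hW : IsVertexCover E W := by
    intro e he
    by_contra! hnot
    refine not_isTTransversal_blowupGraph hT hχ hlow he (hunif e he) (hE e he)
      (fun v hv => ?_) ?_ hS
    · have := hnot v hv
      simp only [W, mem_filter, mem_univ, true_and, not_le] at this
      have := card_filter_add_card_filter_not (s := univ) fun i => (v, i) ∈ S.toLeft
      rw [card_univ, Fintype.card_fin] at this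
      omega
    · have := le_card_sdiff (S.toRight.image Prod.snd) univ
      have := (card_image_le (s := S.toRight) (f := Prod.snd)).trans card_toRight_le
      rw [card_univ, Fintype.card_fin] at *
      omega
  calc vertexCoverNumber E * (B - w) ≤ #W * (B - w) :=
        Nat.mul_le_mul_right _ (vertexCoverNumber_le hW)
    _ ≤ #S.toLeft := card_filter_le_card_fiber_mul_le _ _
    _ ≤ #S := card_toLeft_le

end LowerBound

theorem transversal_two_sided_bounds_general {α V : Type*} [Fintype α] [Fintype V] [DecidableEq V]
    (k Δ B C : ℕ) (hk : Fintype.card α = k)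
    (T : SimpleGraph α) [DecidableRel T.Adj] (htree : T.IsTree)
    (χ : α → Fin 2) (hχ : ∀ u v, T.Adj u v → χ u ≠ χ v)
    (hΔdef : Δ = min ((Finset.univ.filter fun v => χ v = 0).sup (fun v => T.degree v))
                     ((Finset.univ.filter fun v => χ v = 1).sup (fun v => T.degree v)))
    (hΔ3 : 3 ≤ Δ)
    (hC : 2 * max (B * Fintype.card V) k < C)
    (E : Finset (Finset V)) (hunif : ∀ e ∈ E, e.card = Δ) :
    sInf {n : ℕ | ∃ S : Finset V, (∀ e ∈ E, ∃ v ∈ e, v ∈ S) ∧ S.card = n} * (B - k ^ (3 * k))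
      ≤ sInf {n : ℕ | ∃ S : Finset ((V × Fin B) ⊕
            ({e' : Finset (V × Fin B) // e'.card = Δ ∧ e'.image Prod.fst ∈ E} × Fin C)),
          IsTTransversal T
            (incidenceGraph (fun (p : V × Fin B)
                (ec : {e' : Finset (V × Fin B) // e'.card = Δ ∧ e'.image Prod.fst ∈ E} × Fin C)
                => p ∈ ec.1.val)) ↑S ∧ S.card = n}
    ∧ sInf {n : ℕ | ∃ S : Finset ((V × Fin B) ⊕
            ({e' : Finset (V × Fin B) // e'.card = Δ ∧ e'.image Prod.fst ∈ E} × Fin C)),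
          IsTTransversal T
            (incidenceGraph (fun (p : V × Fin B)
                (ec : {e' : Finset (V × Fin B) // e'.card = Δ ∧ e'.image Prod.fst ∈ E} × Fin C)
                => p ∈ ec.1.val)) ↑S ∧ S.card = n}
      ≤ sInf {n : ℕ | ∃ S : Finset V, (∀ e ∈ E, ∃ v ∈ e, v ∈ S) ∧ S.card = n} * B := by
  change vertexCoverNumber E * (B - k ^ (3 * k)) ≤ transversalNumber T (blowupGraph E Δ B C) ∧
    transversalNumber T (blowupGraph E Δ B C) ≤ vertexCoverNumber E * B
  have hncard (u : α) : (T.neighborSet u).ncard = T.degree u := by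
    rw [← Nat.card_coe_set_eq, Nat.card_eq_fintype_card, SimpleGraph.card_neighborSet_eq_degree]
  simp only [← hncard] at hΔdef
  have hΔ : 0 < Δ := by omega
  obtain ⟨i₀, hlow⟩ := exists_forall_le_of_eq_min_sup hΔdef
  have : Nonempty α := htree.connected.nonempty
  have hkw : Fintype.card α ≤ k ^ (3 * k) :=
    hk ▸ Nat.le_self_pow (by have := Fintype.card_pos (α := α); omega) _
  have hBC : B * Fintype.card V + Fintype.card α ≤ C := by
    have := le_max_left (B * Fintype.card V) k
    have := le_max_right (B * Fintype.card V) k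
    omega
  obtain ⟨S₀, hS₀, hS₀card⟩ :=
    exists_isVertexCover_card_eq fun e he => card_pos.1 (hunif e he ▸ hΔ)
  refine ⟨le_transversalNumber fun S hS =>
    vertexCoverNumber_mul_le_card htree hχ hlow hunif hΔ hkw hBC hS, ?_⟩
  calc transversalNumber T (blowupGraph E Δ B C)
      ≤ #((S₀ ×ˢ univ).map .inl : Finset ((V × Fin B) ⊕ (BlowupHyperedge E Δ B × Fin C))) :=
        transversalNumber_le <| isTTransversal_blowupGraph htree.connected.preconnected hχ
          (exists_le_of_eq_min_sup hΔdef hΔ) hS₀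
    _ = vertexCoverNumber E * B := by simp [hS₀card]

/-- Soundness: let `T` be a tree with `k` vertices and `Δ = Δ(T) ≥ 3` (where `Δ(T)` is computed
from a proper 2-coloring `χ` of `T`), let `H = (V, E)` be a `Δ`-uniform hypergraph,
`w = k^(3k)`, `B > w`, `C > 2·max(B·|V(H)|, k)`, and let `G` be the vertex–hyperedge incidence
graph of the `B`-blowup of `H` with each hyperedge duplicated `C` times.  Then
`τ(H) · (B - w) ≤ τ_T(G) ≤ τ(H) · B`. -/
theorem transversal_two_sided_bounds {α V : Type*} [Fintype α] [Fintype V] [DecidableEq V]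
    (k Δ B C : ℕ) (hk : Fintype.card α = k)
    (T : SimpleGraph α) [DecidableRel T.Adj] (htree : T.IsTree)
    (χ : α → Fin 2) (hχ : ∀ u v, T.Adj u v → χ u ≠ χ v)
    (hΔdef : Δ = min ((Finset.univ.filter fun v => χ v = 0).sup (fun v => T.degree v))
                     ((Finset.univ.filter fun v => χ v = 1).sup (fun v => T.degree v)))
    (hΔ3 : 3 ≤ Δ)
    (hB : k ^ (3 * k) < B) (hC : 2 * max (B * Fintype.card V) k < C)
    (E : Finset (Finset V)) (hunif : ∀ e ∈ E, e.card = Δ) :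
    sInf {n : ℕ | ∃ S : Finset V, (∀ e ∈ E, ∃ v ∈ e, v ∈ S) ∧ S.card = n} * (B - k ^ (3 * k))
      ≤ sInf {n : ℕ | ∃ S : Finset ((V × Fin B) ⊕
            ({e' : Finset (V × Fin B) // e'.card = Δ ∧ e'.image Prod.fst ∈ E} × Fin C)),
          IsTTransversal T
            (incidenceGraph (fun (p : V × Fin B)
                (ec : {e' : Finset (V × Fin B) // e'.card = Δ ∧ e'.image Prod.fst ∈ E} × Fin C)
                => p ∈ ec.1.val)) ↑S ∧ S.card = n}
    ∧ sInf {n : ℕ | ∃ S : Finset ((V × Fin B) ⊕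
            ({e' : Finset (V × Fin B) // e'.card = Δ ∧ e'.image Prod.fst ∈ E} × Fin C)),
          IsTTransversal T
            (incidenceGraph (fun (p : V × Fin B)
                (ec : {e' : Finset (V × Fin B) // e'.card = Δ ∧ e'.image Prod.fst ∈ E} × Fin C)
                => p ∈ ec.1.val)) ↑S ∧ S.card = n}
      ≤ sInf {n : ℕ | ∃ S : Finset V, (∀ e ∈ E, ∃ v ∈ e, v ∈ S) ∧ S.card = n} * B :=
  transversal_two_sided_bounds_general k Δ B C hk T htree χ hχ hΔdef hΔ3 hC E hunif
end
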